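/- Let 1 < p < ∞, p ≠ 4, η_p = (4-p)/(4(1-p)), u(x) = (x1²+x2²)²+16x3², and ζ = u^(η_p). Then Δ_p ζ = 0 on ℝ³ \ {0}, where Δ_p ζ = X1(‖∇₀ζ‖^(p-2) X1ζ) + X2(‖∇₀ζ‖^(p-2) X2ζ). -/

import Mathlib

noncomputable section

abbrev P3 : Type := ℝ × ℝ × ℝ

/-- Heisenberg vector field X1 = ∂/∂x1 - (x2/2) ∂/∂x3 (real-valued functions). -/
def X1r (u : P3 → ℝ) (p : P3) : ℝ :=
  fderiv ℝ u p (1, 0, 0) - p.2.1 / 2 * fderiv ℝ u p (0, 0, 1)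

/-- Heisenberg vector field X2 = ∂/∂x2 + (x1/2) ∂/∂x3 (real-valued functions). -/
def X2r (u : P3 → ℝ) (p : P3) : ℝ :=
  fderiv ℝ u p (0, 1, 0) + p.1 / 2 * fderiv ℝ u p (0, 0, 1)

def uR (p : P3) : ℝ := (p.1 ^ 2 + p.2.1 ^ 2) ^ 2 + 16 * p.2.2 ^ 2

def zetaH (p : ℝ) (q : P3) : ℝ := uR q ^ ((4 - p) / (4 * (1 - p)))

/-- The Heisenberg p-Laplacian for real-valued functions. -/
def DeltaPHr (p : ℝ) (ζ : P3 → ℝ) (q : P3) : ℝ :=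
  X1r (fun r => Real.sqrt ((X1r ζ r) ^ 2 + (X2r ζ r) ^ 2) ^ (p - 2) * X1r ζ r) q +
  X2r (fun r => Real.sqrt ((X1r ζ r) ^ 2 + (X2r ζ r) ^ 2) ^ (p - 2) * X2r ζ r) q

/-!
Write `ρ = x1² + x2²` and `A = X1 u`, `B = X2 u`, so that `A² + B² = 16 ρ u`. Since
`X_i ζ = η u^(η-1) (A, B)_i`, the flux `‖∇₀ζ‖^(p-2) X_i ζ` is a constant multiple of
`ρ^a u^b (A, B)_i` with `a = (p-2)/2` and `b = -(p+4)/4`. Off the `x3`-axis the Leibniz rule,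
together with `x1 A + x2 B = 4ρ²` and `X1 A = X2 B = 12ρ`, gives
`X1 (ρ^a u^b A) + X2 (ρ^a u^b B) = 8 (a + 2b + 3) ρ^(a+1) u^b`, and `a + 2b + 3 = 0`.
On the axis `ρ = 0` the flux is `ρ^a` times a function vanishing there: for `a > 0` it has
derivative zero, for `a = 0` the computation above still applies, and for `a < 0` it is not
differentiable, so both derivatives in `Δ_p` take the junk value `fderiv = 0`.
-/

open Real Filter Asymptotics Topology

lemma hasFDerivAt_mul_of_eq_zero {E : Type*} [NormedAddCommGroup E] [NormedSpace ℝ E]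
    {f g : E → ℝ} {x : E} (hg : ContinuousAt g x) (hgx : g x = 0)
    (hf : DifferentiableAt ℝ f x) (hfx : f x = 0) :
    HasFDerivAt (fun y => g y * f y) (0 : E →L[ℝ] ℝ) x := by
  have hg0 : g =o[𝓝 x] fun _ => (1 : ℝ) := (isLittleO_one_iff ℝ).2 (hgx ▸ hg.tendsto)
  have hf0 : f =O[𝓝 x] fun y => ‖y - x‖ := by
    simpa [hfx] using hf.hasFDerivAt.isBigO_sub.norm_right
  rw [hasFDerivAt_iff_isLittleO]
  simpa [hfx, isLittleO_norm_right] using hg0.mul_isBigO hf0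

lemma not_differentiableAt_sq_rpow_mul {a : ℝ} (ha : a < 0) {φ : ℝ → ℝ}
    (hφ : ContinuousAt φ 0) (hφ0 : φ 0 ≠ 0) :
    ¬ DifferentiableAt ℝ (fun s : ℝ => (s ^ 2) ^ a * (s * φ s)) 0 := by
  intro hd
  have hpow : Tendsto (fun s : ℝ => (s ^ 2) ^ a) (𝓝[≠] 0) atTop := by
    refine (tendsto_rpow_neg_nhdsGT_zero ha).comp (tendsto_nhdsWithin_iff.2 ⟨?_, ?_⟩)
    · exact ((continuous_pow 2).tendsto' 0 0 (by simp)).mono_left nhdsWithin_le_nhds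
    · filter_upwards [self_mem_nhdsWithin] with s (hs : s ≠ 0) using (by positivity : 0 < s ^ 2)
  refine not_tendsto_nhds_of_tendsto_atTop hpow _
    ((hd.hasDerivAt.tendsto_slope.div (hφ.tendsto.mono_left nhdsWithin_le_nhds) hφ0).congr' ?_)
  filter_upwards [self_mem_nhdsWithin, nhdsWithin_le_nhds (hφ.eventually_ne hφ0)]
    with s (hs : s ≠ 0) hφs
  simp only [Pi.div_apply, slope_def_field, sub_zero, zero_pow two_ne_zero, zero_mul, mul_zero]
  field_simp

lemma sqrt_sq_add_sq_rpow_mul_eq {U R A B e p : ℝ} (hU : 0 < U) (hR : 0 ≤ R)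
    (hAB : A ^ 2 + B ^ 2 = 16 * R * U) :
    √((e * U ^ (e - 1) * A) ^ 2 + (e * U ^ (e - 1) * B) ^ 2) ^ (p - 2) * (e * U ^ (e - 1) * A)
      = e * (4 * |e|) ^ (p - 2) *
        (R ^ ((p - 2) / 2) * (U ^ ((e - 1) * (p - 1) + (p - 2) / 2) * A)) := by
  have hsq : (e * U ^ (e - 1) * A) ^ 2 + (e * U ^ (e - 1) * B) ^ 2
      = (4 * |e| * U ^ (e - 1)) ^ 2 * (R * U) := by
    linear_combination (e * U ^ (e - 1)) ^ 2 * hAB - 16 * (U ^ (e - 1)) ^ 2 * R * U * sq_abs e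
  have hUe : 0 ≤ U ^ (e - 1) := rpow_nonneg hU.le _
  have hsplit : U ^ ((e - 1) * (p - 1) + (p - 2) / 2)
      = U ^ ((e - 1) * (p - 2)) * U ^ ((p - 2) / 2) * U ^ (e - 1) := by
    rw [← rpow_add hU, ← rpow_add hU]; ring_nf
  rw [hsq, sqrt_mul (sq_nonneg _), sqrt_sq (by positivity), sqrt_eq_rpow,
    mul_rpow (by positivity) (by positivity), mul_rpow (by positivity) hUe,
    ← rpow_mul (mul_nonneg hR hU.le), mul_rpow hR hU.le, ← rpow_mul hU.le, hsplit,
    show 1 / 2 * (p - 2) = (p - 2) / 2 by ring]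
  ring

namespace Heisenberg

section VectorFields

variable {f g : P3 → ℝ} {q : P3}

lemma X1r_congr (h : f =ᶠ[𝓝 q] g) : X1r f q = X1r g q := by
  rw [X1r, X1r, h.fderiv_eq]

lemma X2r_congr (h : f =ᶠ[𝓝 q] g) : X2r f q = X2r g q := by
  rw [X2r, X2r, h.fderiv_eq]

lemma X1r_eq_zero_of_fderiv_eq_zero (h : fderiv ℝ f q = 0) : X1r f q = 0 := by
  simp [X1r, h]

lemma X2r_eq_zero_of_fderiv_eq_zero (h : fderiv ℝ f q = 0) : X2r f q = 0 := by
  simp [X2r, h]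

lemma X1r_const_mul (c : ℝ) : X1r (fun r => c * f r) q = c * X1r f q := by
  rw [X1r, X1r, show (fun r => c * f r) = c • f from rfl, fderiv_const_smul_field]
  simp only [Pi.smul_apply, smul_apply, smul_eq_mul]
  ring

lemma X2r_const_mul (c : ℝ) : X2r (fun r => c * f r) q = c * X2r f q := by
  rw [X2r, X2r, show (fun r => c * f r) = c • f from rfl, fderiv_const_smul_field]
  simp only [Pi.smul_apply, smul_apply, smul_eq_mul]
  ring

lemma X1r_mul (hf : DifferentiableAt ℝ f q) (hg : DifferentiableAt ℝ g q) :
    X1r (fun r => f r * g r) q = X1r f q * g q + f q * X1r g q := by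
  rw [X1r, X1r, X1r, fderiv_fun_mul hf hg]
  simp only [add_apply, smul_apply, smul_eq_mul]
  ring

lemma X2r_mul (hf : DifferentiableAt ℝ f q) (hg : DifferentiableAt ℝ g q) :
    X2r (fun r => f r * g r) q = X2r f q * g q + f q * X2r g q := by
  rw [X2r, X2r, X2r, fderiv_fun_mul hf hg]
  simp only [add_apply, smul_apply, smul_eq_mul]
  ring

lemma X1r_rpow_const {a : ℝ} (hf : DifferentiableAt ℝ f q) (h : f q ≠ 0 ∨ a = 0) :
    X1r (fun r => f r ^ a) q = a * f q ^ (a - 1) * X1r f q := by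
  rcases h with h | rfl
  · rw [X1r, X1r, (hf.hasFDerivAt.rpow_const (Or.inl h)).fderiv]
    simp only [smul_apply, smul_eq_mul]
    ring
  · simp [X1r]

lemma X2r_rpow_const {a : ℝ} (hf : DifferentiableAt ℝ f q) (h : f q ≠ 0 ∨ a = 0) :
    X2r (fun r => f r ^ a) q = a * f q ^ (a - 1) * X2r f q := by
  rcases h with h | rfl
  · rw [X2r, X2r, (hf.hasFDerivAt.rpow_const (Or.inl h)).fderiv]
    simp only [smul_apply, smul_eq_mul]
    ring
  · simp [X2r]

end VectorFields

def rho (r : P3) : ℝ := r.1 ^ 2 + r.2.1 ^ 2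

def X1uR (r : P3) : ℝ := 4 * r.1 * rho r - 16 * r.2.1 * r.2.2

def X2uR (r : P3) : ℝ := 4 * r.2.1 * rho r + 16 * r.1 * r.2.2

lemma rho_nonneg (r : P3) : 0 ≤ rho r := by unfold rho; positivity

lemma rho_eq_zero_iff {r : P3} : rho r = 0 ↔ r.1 = 0 ∧ r.2.1 = 0 := by
  rw [rho, add_eq_zero_iff_of_nonneg (sq_nonneg _) (sq_nonneg _), sq_eq_zero_iff, sq_eq_zero_iff]

lemma uR_pos {r : P3} (hr : r ≠ 0) : 0 < uR r := by
  refine lt_of_le_of_ne (by unfold uR; positivity) fun h => hr ?_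
  rw [uR, eq_comm, add_eq_zero_iff_of_nonneg (by positivity) (by positivity)] at h
  obtain ⟨h1, h2⟩ := rho_eq_zero_iff.1 (pow_eq_zero_iff two_ne_zero |>.1 h.1)
  exact Prod.ext h1 (Prod.ext h2 (by simpa using h.2))

lemma X1uR_sq_add_X2uR_sq (r : P3) : X1uR r ^ 2 + X2uR r ^ 2 = 16 * rho r * uR r := by
  simp only [X1uR, X2uR, rho, uR]; ring

lemma differentiable_rho : Differentiable ℝ rho := by unfold rho; fun_prop

lemma differentiable_uR : Differentiable ℝ uR := by unfold uR; fun_prop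

lemma differentiable_X1uR : Differentiable ℝ X1uR := by unfold X1uR rho; fun_prop

lemma differentiable_X2uR : Differentiable ℝ X2uR := by unfold X2uR rho; fun_prop

lemma hasFDerivAt_snd_fst (q : P3) :
    HasFDerivAt (fun r : P3 => r.2.1)
      ((ContinuousLinearMap.fst ℝ ℝ ℝ).comp
        (ContinuousLinearMap.snd ℝ ℝ (ℝ × ℝ))) q :=
  hasFDerivAt_fst.comp q hasFDerivAt_snd

lemma hasFDerivAt_snd_snd (q : P3) :
    HasFDerivAt (fun r : P3 => r.2.2)
      ((ContinuousLinearMap.snd ℝ ℝ ℝ).comp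
        (ContinuousLinearMap.snd ℝ ℝ (ℝ × ℝ))) q :=
  hasFDerivAt_snd.comp q hasFDerivAt_snd

lemma fderiv_rho_apply (q v : P3) : fderiv ℝ rho q v = 2 * q.1 * v.1 + 2 * q.2.1 * v.2.1 := by
  have h : HasFDerivAt rho (_ : P3 →L[ℝ] ℝ) q :=
    (hasFDerivAt_fst.pow 2).add ((hasFDerivAt_snd_fst q).pow 2)
  rw [h.fderiv]; simp

lemma fderiv_uR_apply (q v : P3) :
    fderiv ℝ uR q v = 4 * rho q * (q.1 * v.1 + q.2.1 * v.2.1) + 32 * q.2.2 * v.2.2 := by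
  have h : HasFDerivAt uR (_ : P3 →L[ℝ] ℝ) q :=
    (((hasFDerivAt_fst.pow 2).add ((hasFDerivAt_snd_fst q).pow 2)).pow 2).add
      (((hasFDerivAt_snd_snd q).pow 2).const_mul 16)
  rw [h.fderiv]
  simp only [Pi.add_apply, Nat.add_one_sub_one, pow_one, smul_add, nsmul_eq_mul, Nat.cast_ofNat,
    add_apply, smul_apply, ContinuousLinearMap.coe_fst', smul_eq_mul,
    ContinuousLinearMap.comp_apply, ContinuousLinearMap.coe_snd', rho]
  ring

lemma X1r_rho (q : P3) : X1r rho q = 2 * q.1 := by simp [X1r, fderiv_rho_apply]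

lemma X2r_rho (q : P3) : X2r rho q = 2 * q.2.1 := by simp [X2r, fderiv_rho_apply]

lemma X1r_uR (q : P3) : X1r uR q = X1uR q := by
  simp only [X1r, X1uR, fderiv_uR_apply]
  ring

lemma X2r_uR (q : P3) : X2r uR q = X2uR q := by
  simp only [X2r, X2uR, fderiv_uR_apply]
  ring

lemma X1r_X1uR (q : P3) : X1r X1uR q = 12 * rho q := by
  have h : HasFDerivAt X1uR (_ : P3 →L[ℝ] ℝ) q :=
    ((hasFDerivAt_fst.const_mul 4).mul ((hasFDerivAt_fst.pow 2).add
      ((hasFDerivAt_snd_fst q).pow 2))).sub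
      (((hasFDerivAt_snd_fst q).const_mul 16).mul (hasFDerivAt_snd_snd q))
  rw [X1r, h.fderiv]
  simp only [Nat.add_one_sub_one, pow_one, nsmul_eq_mul, Nat.cast_ofNat, smul_add, Pi.add_apply,
    sub_apply, add_apply, smul_apply, ContinuousLinearMap.coe_fst', smul_eq_mul,
    ContinuousLinearMap.comp_apply, ContinuousLinearMap.coe_snd', rho]
  ring

lemma X2r_X2uR (q : P3) : X2r X2uR q = 12 * rho q := by
  have h : HasFDerivAt X2uR (_ : P3 →L[ℝ] ℝ) q :=
    (((hasFDerivAt_snd_fst q).const_mul 4).mul ((hasFDerivAt_fst.pow 2).add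
      ((hasFDerivAt_snd_fst q).pow 2))).add
      ((hasFDerivAt_fst.const_mul 16).mul (hasFDerivAt_snd_snd q))
  rw [X2r, h.fderiv]
  simp only [Nat.add_one_sub_one, pow_one, nsmul_eq_mul, Nat.cast_ofNat, smul_add, Pi.add_apply,
    add_apply, smul_apply, ContinuousLinearMap.coe_fst', smul_eq_mul,
    ContinuousLinearMap.comp_apply, ContinuousLinearMap.coe_snd', rho]
  ring

def flux (a b : ℝ) (W : P3 → ℝ) (r : P3) : ℝ := rho r ^ a * (uR r ^ b * W r)

lemma X1r_flux_add_X2r_flux_eq_zero_of_rho_ne_zero_or {a b : ℝ} (hab : a + 2 * b + 3 = 0)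
    {q : P3} (hq : q ≠ 0) (h : rho q ≠ 0 ∨ a = 0) :
    X1r (flux a b X1uR) q + X2r (flux a b X2uR) q = 0 := by
  have hu := (uR_pos hq).ne'
  have hρa : DifferentiableAt ℝ (fun r => rho r ^ a) q := by
    rcases h with h | rfl
    · exact (differentiable_rho q).rpow_const (Or.inl h)
    · simp
  have hub : DifferentiableAt ℝ (fun r => uR r ^ b) q :=
    (differentiable_uR q).rpow_const (Or.inl hu)
  have hρ2 : 2 * q.1 * X1uR q + 2 * q.2.1 * X2uR q = 8 * rho q ^ 2 := by
    simp only [X1uR, X2uR, rho]; ring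
  have hu1 : uR q ^ (b - 1) * uR q = uR q ^ b := by rw [rpow_sub_one hu, div_mul_cancel₀ _ hu]
  have hρ1 : a * (rho q ^ (a - 1) * rho q) = a * rho q ^ a := by
    rcases h with h | rfl
    · rw [rpow_sub_one h, div_mul_cancel₀ _ h]
    · simp
  unfold flux
  rw [X1r_mul hρa (hub.fun_mul (differentiable_X1uR q)), X1r_mul hub (differentiable_X1uR q),
    X2r_mul hρa (hub.fun_mul (differentiable_X2uR q)), X2r_mul hub (differentiable_X2uR q),
    X1r_rpow_const (differentiable_rho q) h, X2r_rpow_const (differentiable_rho q) h,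
    X1r_rpow_const (differentiable_uR q) (Or.inl hu),
    X2r_rpow_const (differentiable_uR q) (Or.inl hu),
    X1r_rho, X2r_rho, X1r_uR, X2r_uR, X1r_X1uR, X2r_X2uR]
  linear_combination (a * rho q ^ (a - 1) * uR q ^ b) * hρ2
    + (b * rho q ^ a * uR q ^ (b - 1)) * X1uR_sq_add_X2uR_sq q
    + (16 * b * rho q ^ a * rho q) * hu1 + (8 * uR q ^ b * rho q) * hρ1
    + (8 * rho q ^ a * uR q ^ b * rho q) * hab

lemma fderiv_flux_eq_zero_on_axis {a b : ℝ} (ha : a ≠ 0) {W : P3 → ℝ}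
    (hW : Differentiable ℝ W) {q v : P3} {k : ℝ} (hk : k ≠ 0) (hu : 0 < uR q)
    (hρ : ∀ s : ℝ, rho (q + s • v) = s ^ 2) (hWv : ∀ s : ℝ, W (q + s • v) = k * s) :
    fderiv ℝ (flux a b W) q = 0 := by
  have hρq : rho q = 0 := by simpa using hρ 0
  have hWq : W q = 0 := by simpa using hWv 0
  rcases ha.lt_or_gt with ha | ha
  · refine fderiv_zero_of_not_differentiableAt fun hd => ?_
    have hline : DifferentiableAt ℝ (fun s : ℝ => flux a b W (q + s • v)) 0 := by
      refine DifferentiableAt.comp (g := flux a b W) 0 ?_ (by fun_prop)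
      simpa using hd
    have hφ : ContinuousAt (fun s : ℝ => uR (q + s • v) ^ b * k) 0 :=
      ((differentiable_uR.continuous.comp (by fun_prop)).continuousAt.rpow_const
        (Or.inl (by simpa using hu.ne'))).mul continuousAt_const
    have hφ0 : uR (q + (0 : ℝ) • v) ^ b * k ≠ 0 := by
      simpa using mul_ne_zero (rpow_pos_of_pos hu b).ne' hk
    refine not_differentiableAt_sq_rpow_mul ha hφ hφ0 ?_
    convert hline using 2 with s
    simp only [flux, hρ, hWv]
    ring
  · have hρa : ContinuousAt (fun r => rho r ^ a) q :=
      differentiable_rho.continuous.continuousAt.rpow_const (Or.inr ha.le)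
    have huW : DifferentiableAt ℝ (fun r => uR r ^ b * W r) q :=
      ((differentiable_uR q).rpow_const (Or.inl hu.ne')).fun_mul (hW q)
    exact (hasFDerivAt_mul_of_eq_zero hρa (by simp [hρq, zero_rpow ha.ne']) huW
      (by simp [hWq])).fderiv

lemma X1r_flux_add_X2r_flux_eq_zero {a b : ℝ} (hab : a + 2 * b + 3 = 0) {q : P3} (hq : q ≠ 0) :
    X1r (flux a b X1uR) q + X2r (flux a b X2uR) q = 0 := by
  by_cases h : rho q ≠ 0 ∨ a = 0
  · exact X1r_flux_add_X2r_flux_eq_zero_of_rho_ne_zero_or hab hq h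
  push Not at h
  obtain ⟨hx, hy⟩ := rho_eq_zero_iff.1 h.1
  have hz : q.2.2 ≠ 0 := fun hz => hq (Prod.ext hx (Prod.ext hy hz))
  have h1 : fderiv ℝ (flux a b X1uR) q = 0 :=
    fderiv_flux_eq_zero_on_axis h.2 differentiable_X1uR (v := (0, 1, 0)) (k := -16 * q.2.2)
      (by simpa using hz) (uR_pos hq) (fun s => by simp [rho, hx, hy]) fun s => by
        simp only [X1uR, rho, hx, hy, Prod.smul_mk, smul_eq_mul, Prod.fst_add, Prod.snd_add]
        ring
  have h2 : fderiv ℝ (flux a b X2uR) q = 0 :=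
    fderiv_flux_eq_zero_on_axis h.2 differentiable_X2uR (v := (1, 0, 0)) (k := 16 * q.2.2)
      (by simpa using hz) (uR_pos hq) (fun s => by simp [rho, hx, hy]) fun s => by
        simp only [X2uR, rho, hx, hy, Prod.smul_mk, smul_eq_mul, Prod.fst_add, Prod.snd_add]
        ring
  rw [X1r_eq_zero_of_fderiv_eq_zero h1, X2r_eq_zero_of_fderiv_eq_zero h2, add_zero]

def etaP (p : ℝ) : ℝ := (4 - p) / (4 * (1 - p))

lemma etaP_sub_one_mul_add (p : ℝ) (hp : p ≠ 1) :
    (etaP p - 1) * (p - 1) + (p - 2) / 2 = -((p + 4) / 4) := by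
  have : 1 - p ≠ 0 := sub_ne_zero.2 hp.symm
  unfold etaP
  field_simp
  ring

lemma X1r_zetaH (p : ℝ) {r : P3} (hr : r ≠ 0) :
    X1r (zetaH p) r = etaP p * uR r ^ (etaP p - 1) * X1uR r := by
  rw [← X1r_uR]
  exact X1r_rpow_const (differentiable_uR r) (Or.inl (uR_pos hr).ne')

lemma X2r_zetaH (p : ℝ) {r : P3} (hr : r ≠ 0) :
    X2r (zetaH p) r = etaP p * uR r ^ (etaP p - 1) * X2uR r := by
  rw [← X2r_uR]
  exact X2r_rpow_const (differentiable_uR r) (Or.inl (uR_pos hr).ne')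

lemma flux_zetaH_X1 {p : ℝ} (hp : p ≠ 1) {r : P3} (hr : r ≠ 0) :
    √(X1r (zetaH p) r ^ 2 + X2r (zetaH p) r ^ 2) ^ (p - 2) * X1r (zetaH p) r
      = etaP p * (4 * |etaP p|) ^ (p - 2) * flux ((p - 2) / 2) (-((p + 4) / 4)) X1uR r := by
  rw [X1r_zetaH p hr, X2r_zetaH p hr, sqrt_sq_add_sq_rpow_mul_eq (uR_pos hr) (rho_nonneg r)
    (X1uR_sq_add_X2uR_sq r), etaP_sub_one_mul_add p hp, flux]

lemma flux_zetaH_X2 {p : ℝ} (hp : p ≠ 1) {r : P3} (hr : r ≠ 0) :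
    √(X1r (zetaH p) r ^ 2 + X2r (zetaH p) r ^ 2) ^ (p - 2) * X2r (zetaH p) r
      = etaP p * (4 * |etaP p|) ^ (p - 2) * flux ((p - 2) / 2) (-((p + 4) / 4)) X2uR r := by
  rw [X1r_zetaH p hr, X2r_zetaH p hr, add_comm, sqrt_sq_add_sq_rpow_mul_eq (uR_pos hr)
    (rho_nonneg r) (by rw [add_comm]; exact X1uR_sq_add_X2uR_sq r), etaP_sub_one_mul_add p hp,
    flux]

end Heisenberg

open Heisenberg

theorem heisenberg_p_harmonic_general (p : ℝ) (hp1 : 1 < p)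
    (q : P3) (hq : q ≠ 0) :
    DeltaPHr p (zetaH p) q = 0 := by
  have hnear : ∀ᶠ r in 𝓝 q, r ≠ 0 := eventually_ne_nhds hq
  rw [DeltaPHr, X1r_congr (hnear.mono fun r hr => flux_zetaH_X1 hp1.ne' hr),
    X2r_congr (hnear.mono fun r hr => flux_zetaH_X2 hp1.ne' hr), X1r_const_mul, X2r_const_mul,
    ← mul_add, X1r_flux_add_X2r_flux_eq_zero (by ring) hq, mul_zero]

theorem heisenberg_p_harmonic (p : ℝ) (hp1 : 1 < p) (hp4 : p ≠ 4)
    (q : P3) (hq : q ≠ 0) :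
    DeltaPHr p (zetaH p) q = 0 :=
  heisenberg_p_harmonic_general p hp1 q hq
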